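/- arXiv:2412.02710 — 4 statements merged into one kernel-verified Lean document; each statement's English description precedes it below -/
import Mathlib

section
/- Consider the CIBC system with n ≥ 3 agents and confidence bounds r_1 ≥ ⋯ ≥ r_n > 0 with r_n < 2. For every initial state x(0) with ‖x_i(0)‖ ≤ 1 for all i, there exist an integer T with 0 ≤ T < T_n, where T_n := [3n − 2 + 8(2/r_n − 1)(n + 5/3 − 2·log(n+2))]·(⌈log₂(2/r_n)⌉ + 1) + n − 2 (log the natural logarithm), and edge sets E'_0, E'_1, …, E'_{T−1} ⊆ A such that at time T the state satisfies: for every pair i ≠ j, either x_i(T) = x_j(T) or ‖x_i(T) − x_j(T)‖ > max{r_i, r_j}. -/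
open Finset MeasureTheory ProbabilityTheory Metric

noncomputable section

open scoped Classical

/-- The neighbor set of agent `i`. -/
def nbr {n d : ℕ} (r : Fin n → ℝ) (E : Finset (Fin n × Fin n))
    (x : Fin n → EuclideanSpace ℝ (Fin d)) (i : Fin n) : Finset (Fin n) :=
  Finset.univ.filter (fun j => j ≠ i ∧ (i, j) ∈ E ∧ ‖x i - x j‖ ≤ r i)

/-- One step of the bounded-confidence dynamics. -/
def step {n d : ℕ} (r : Fin n → ℝ) (E : Finset (Fin n × Fin n))
    (x : Fin n → EuclideanSpace ℝ (Fin d)) : Fin n → EuclideanSpace ℝ (Fin d) :=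
  fun i => ((1 : ℝ) + (nbr r E x i).card)⁻¹ • (x i + ∑ j ∈ nbr r E x i, x j)

/-- The trajectory of the bounded-confidence dynamics driven by edge sets `E`. -/
def traj {n d : ℕ} (r : Fin n → ℝ) (E : ℕ → Finset (Fin n × Fin n))
    (x0 : Fin n → EuclideanSpace ℝ (Fin d)) : ℕ → Fin n → EuclideanSpace ℝ (Fin d)
  | 0 => x0
  | t + 1 => step r (E t) (traj r E x0 t)

instance (α : Type*) : MeasurableSpace (Finset α) := ⊤

/-- The time bound `T_n` from the paper, with `rn` the smallest confidence bound. -/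
def Tbound (n : ℕ) (rn : ℝ) : ℝ :=
  (3 * n - 2 + 8 * (2 / rn - 1) * (n + 5 / 3 - 2 * Real.log (n + 2))) *
    ((⌈Real.logb 2 (2 / rn)⌉ : ℝ) + 1) + n - 2

namespace CIBC

variable {n d : ℕ} {r : Fin n → ℝ}

/-- Reachability in exactly `L` steps using admissible (off-diagonal) edge sets. -/
def Reach (r : Fin n → ℝ) (x y : Fin n → EuclideanSpace ℝ (Fin d)) (L : ℕ) : Prop :=
  ∃ E : ℕ → Finset (Fin n × Fin n),
    (∀ s, E s ⊆ (Finset.univ : Finset (Fin n)).offDiag) ∧ traj r E x L = y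

lemma traj_congr {E E' : ℕ → Finset (Fin n × Fin n)}
    {x : Fin n → EuclideanSpace ℝ (Fin d)} :
    ∀ t, (∀ s, s < t → E s = E' s) → traj r E x t = traj r E' x t := by
  intro t
  induction t with
  | zero => intro _; rfl
  | succ t ih =>
    intro h
    show step r (E t) (traj r E x t) = step r (E' t) (traj r E' x t)
    rw [ih (fun s hs => h s (Nat.lt_succ_of_lt hs)), h t (Nat.lt_succ_self t)]

lemma traj_add {E : ℕ → Finset (Fin n × Fin n)}
    {x : Fin n → EuclideanSpace ℝ (Fin d)} (L : ℕ) :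
    ∀ m, traj r E x (L + m) = traj r (fun k => E (L + k)) (traj r E x L) m := by
  intro m
  induction m with
  | zero => rfl
  | succ m ih =>
    show step r (E (L + m)) (traj r E x (L + m)) = _
    rw [ih]; rfl

lemma Reach.refl (x : Fin n → EuclideanSpace ℝ (Fin d)) : Reach r x x 0 :=
  ⟨fun _ => ∅, fun _ => Finset.empty_subset _, rfl⟩

lemma Reach.single {x : Fin n → EuclideanSpace ℝ (Fin d)}
    (E0 : Finset (Fin n × Fin n)) (hE0 : E0 ⊆ (Finset.univ : Finset (Fin n)).offDiag) :
    Reach r x (step r E0 x) 1 :=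
  ⟨fun _ => E0, fun _ => hE0, rfl⟩

lemma Reach.trans {x y z : Fin n → EuclideanSpace ℝ (Fin d)} {L M : ℕ}
    (h1 : Reach r x y L) (h2 : Reach r y z M) : Reach r x z (L + M) := by
  obtain ⟨E1, hE1, hxy⟩ := h1
  obtain ⟨E2, hE2, hyz⟩ := h2
  set F : ℕ → Finset (Fin n × Fin n) := fun t => if t < L then E1 t else E2 (t - L) with hF
  refine ⟨F, fun s => ?_, ?_⟩
  · by_cases h : s < L
    · simpa [hF, h] using hE1 s
    · simpa [hF, h] using hE2 (s - L)
  · have h1' : traj r F x L = y := by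
      have : traj r F x L = traj r E1 x L :=
        traj_congr L (fun s hs => by simp [hF, hs])
      rw [this, hxy]
    have h2' : traj r (fun k => F (L + k)) y M = traj r E2 y M := by
      refine traj_congr M (fun s _ => ?_)
      simp [hF]
    rw [traj_add L, h1', h2', hyz]

lemma Reach.trans_le {x y z : Fin n → EuclideanSpace ℝ (Fin d)} {L M L' M' : ℕ}
    (h1 : Reach r x y L) (h2 : Reach r y z M) (hL : L ≤ L') (hM : M ≤ M') :
    ∃ K, Reach r x z K ∧ K ≤ L' + M' :=
  ⟨L + M, h1.trans h2, Nat.add_le_add hL hM⟩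

/-- Every step of the dynamics keeps opinions in the unit ball. -/
lemma norm_step_le {E : Finset (Fin n × Fin n)} {x : Fin n → EuclideanSpace ℝ (Fin d)}
    (hx : ∀ k, ‖x k‖ ≤ 1) (k : Fin n) : ‖step r E x k‖ ≤ 1 := by
  have hcard : (0:ℝ) < 1 + (nbr r E x k).card := by positivity
  have h1 : ‖x k + ∑ j ∈ nbr r E x k, x j‖ ≤ 1 + (nbr r E x k).card := by
    calc ‖x k + ∑ j ∈ nbr r E x k, x j‖ ≤ ‖x k‖ + ‖∑ j ∈ nbr r E x k, x j‖ :=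
          norm_add_le _ _
      _ ≤ 1 + (nbr r E x k).card := by
          refine add_le_add (hx k) ?_
          calc ‖∑ j ∈ nbr r E x k, x j‖ ≤ ∑ j ∈ nbr r E x k, ‖x j‖ :=
                norm_sum_le _ _
            _ ≤ ∑ j ∈ nbr r E x k, 1 := Finset.sum_le_sum (fun j _ => hx j)
            _ = (nbr r E x k).card := by simp
  calc ‖step r E x k‖ = ((1:ℝ) + (nbr r E x k).card)⁻¹ * ‖x k + ∑ j ∈ nbr r E x k, x j‖ := by
        rw [step, norm_smul, Real.norm_eq_abs, abs_of_pos (by positivity)]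
    _ ≤ ((1:ℝ) + (nbr r E x k).card)⁻¹ * (1 + (nbr r E x k).card) := by
        exact mul_le_mul_of_nonneg_left h1 (by positivity)
    _ = 1 := inv_mul_cancel₀ (ne_of_gt hcard)

lemma Reach.norm_le {x y : Fin n → EuclideanSpace ℝ (Fin d)} {L : ℕ}
    (h : Reach r x y L) (hx : ∀ k, ‖x k‖ ≤ 1) : ∀ k, ‖y k‖ ≤ 1 := by
  obtain ⟨E, _, hxy⟩ := h
  subst hxy
  induction L with
  | zero => exact hx
  | succ L ih => exact fun k => norm_step_le ih k


variable {n d : ℕ} {r : Fin n → ℝ} {x : Fin n → EuclideanSpace ℝ (Fin d)}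

lemma step_of_nbr_empty {E : Finset (Fin n × Fin n)} {k : Fin n}
    (h : nbr r E x k = ∅) : step r E x k = x k := by
  simp [step, h]

lemma step_of_nbr_single {E : Finset (Fin n × Fin n)} {k j : Fin n}
    (h : nbr r E x k = {j}) : step r E x k = (2:ℝ)⁻¹ • (x k + x j) := by
  simp [step, h]
  norm_num

lemma nbr_pair_self {i z : Fin n} (hz : z ≠ i) (hd : ‖x i - x z‖ ≤ r i) :
    nbr r {(i, z)} x i = {z} := by
  ext j
  simp only [nbr, Finset.mem_filter, Finset.mem_univ, true_and, Finset.mem_singleton,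
    Prod.mk.injEq]
  constructor
  · rintro ⟨-, ⟨-, rfl⟩, -⟩; rfl
  · rintro rfl; exact ⟨hz, rfl, hd⟩

lemma nbr_pair_other {i z k : Fin n} (hk : k ≠ i) : nbr r {(i, z)} x k = ∅ := by
  ext j
  simp only [nbr, Finset.mem_filter, Finset.mem_univ, true_and, Finset.mem_singleton,
    Prod.mk.injEq, Finset.notMem_empty, iff_false]
  rintro ⟨-, ⟨rfl, -⟩, -⟩; exact hk rfl

lemma nbr_fan_mem {B : Finset (Fin n)} {i k : Fin n} (hi : i ∉ B) (hk : k ∈ B)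
    (hd : ‖x k - x i‖ ≤ r k) : nbr r (B ×ˢ {i}) x k = {i} := by
  have hik : i ≠ k := fun h => hi (h ▸ hk)
  ext j
  simp only [nbr, Finset.mem_filter, Finset.mem_univ, true_and, Finset.mem_product,
    Finset.mem_singleton]
  constructor
  · rintro ⟨-, ⟨-, rfl⟩, -⟩; rfl
  · rintro rfl; exact ⟨hik, ⟨hk, rfl⟩, hd⟩

lemma nbr_fan_nonmem {B : Finset (Fin n)} {i k : Fin n} (hk : k ∉ B) :
    nbr r (B ×ˢ {i}) x k = ∅ := by
  ext j
  simp only [nbr, Finset.mem_filter, Finset.mem_univ, true_and, Finset.mem_product,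
    Finset.mem_singleton, Finset.notMem_empty, iff_false]
  rintro ⟨-, ⟨hkB, -⟩, -⟩; exact hk hkB

lemma nbr_clique_mem {S : Finset (Fin n)} {k : Fin n} (hk : k ∈ S)
    (hd : ∀ l ∈ S, ‖x k - x l‖ ≤ r k) : nbr r S.offDiag x k = S.erase k := by
  ext j
  simp only [nbr, Finset.mem_filter, Finset.mem_univ, true_and, Finset.mem_offDiag,
    Finset.mem_erase]
  constructor
  · rintro ⟨hjk, ⟨-, hj, -⟩, -⟩; exact ⟨hjk, hj⟩
  · rintro ⟨hjk, hj⟩; exact ⟨hjk, ⟨hk, hj, fun h => hjk h.symm⟩, hd j hj⟩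

lemma nbr_clique_nonmem {S : Finset (Fin n)} {k : Fin n} (hk : k ∉ S) :
    nbr r S.offDiag x k = ∅ := by
  ext j
  simp only [nbr, Finset.mem_filter, Finset.mem_univ, true_and, Finset.mem_offDiag,
    Finset.notMem_empty, iff_false]
  rintro ⟨-, ⟨hkS, -, -⟩, -⟩; exact hk hkS

lemma step_clique {S : Finset (Fin n)} {k : Fin n} (hk : k ∈ S)
    (hd : ∀ l ∈ S, ‖x k - x l‖ ≤ r k) :
    step r S.offDiag x k = ((S.card : ℝ))⁻¹ • ∑ l ∈ S, x l := by
  have h1 : nbr r S.offDiag x k = S.erase k := nbr_clique_mem hk hd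
  have hcard : 1 ≤ S.card := Finset.card_pos.mpr ⟨k, hk⟩
  have h2 : ((S.erase k).card : ℝ) = (S.card : ℝ) - 1 := by
    rw [Finset.card_erase_of_mem hk]
    push_cast [Nat.cast_sub hcard]
    ring
  have h3 : x k + ∑ l ∈ S.erase k, x l = ∑ l ∈ S, x l :=
    Finset.add_sum_erase S x hk
  rw [step, h1, h2, h3]
  norm_num


variable {d : ℕ}

/-- The point on the segment from `q` (at `0`) to `p` (at `1`) with parameter `σ`. -/
def lin (p q : EuclideanSpace ℝ (Fin d)) (σ : ℝ) : EuclideanSpace ℝ (Fin d) :=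
  q + σ • (p - q)

lemma lin_zero (p q : EuclideanSpace ℝ (Fin d)) : lin p q 0 = q := by
  simp [lin]

lemma lin_one (p q : EuclideanSpace ℝ (Fin d)) : lin p q 1 = p := by
  simp [lin]

lemma lin_sub (p q : EuclideanSpace ℝ (Fin d)) (σ τ : ℝ) :
    lin p q σ - lin p q τ = (σ - τ) • (p - q) := by
  simp only [lin, sub_smul]
  abel

lemma norm_lin_sub (p q : EuclideanSpace ℝ (Fin d)) (σ τ : ℝ) :
    ‖lin p q σ - lin p q τ‖ = |σ - τ| * ‖p - q‖ := by
  rw [lin_sub, norm_smul, Real.norm_eq_abs]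

lemma mid_lin (p q : EuclideanSpace ℝ (Fin d)) (σ τ : ℝ) :
    (2:ℝ)⁻¹ • (lin p q σ + lin p q τ) = lin p q ((σ + τ) / 2) := by
  simp only [lin, smul_add, smul_smul]
  rw [show ((2:ℝ)⁻¹ * σ) = σ/2 by ring, show ((2:ℝ)⁻¹ * τ) = τ/2 by ring]
  rw [show ((σ + τ)/2 : ℝ) = σ/2 + τ/2 by ring, add_smul]
  module


/-! ### The one-dimensional crossing family of states -/

variable {n d : ℕ}

/-- The crossing state: scout `i` at parameter `σ`, blob `B` at parameter `τ`,
all other agents as in `x`. -/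
def Xst (x : Fin n → EuclideanSpace ℝ (Fin d)) (i : Fin n) (B : Finset (Fin n))
    (p q : EuclideanSpace ℝ (Fin d)) (σ τ : ℝ) : Fin n → EuclideanSpace ℝ (Fin d) :=
  fun k => if k = i then lin p q σ else if k ∈ B then lin p q τ else x k

section CrossSteps

variable {r : Fin n → ℝ} {x : Fin n → EuclideanSpace ℝ (Fin d)}
variable {i z0 : Fin n} {B : Finset (Fin n)} {p q : EuclideanSpace ℝ (Fin d)}
variable {σ τ : ℝ}

lemma Xst_apply_i : Xst x i B p q σ τ i = lin p q σ := if_pos rfl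

lemma Xst_apply_mem (hiB : i ∉ B) {k : Fin n} (hk : k ∈ B) :
    Xst x i B p q σ τ k = lin p q τ := by
  have : k ≠ i := fun h => hiB (h ▸ hk)
  simp [Xst, this, hk]

lemma Xst_apply_other {k : Fin n} (hki : k ≠ i) (hkB : k ∉ B) :
    Xst x i B p q σ τ k = x k := by
  simp [Xst, hki, hkB]

/-- Scout halving step towards the target cluster. -/
lemma step_scout (hiB : i ∉ B) (hz0B : z0 ∉ B) (hz0i : z0 ≠ i) (hxz0 : x z0 = q)
    (hσ0 : 0 ≤ σ) (hσ1 : σ ≤ 1) (hri : ‖p - q‖ ≤ r i) :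
    step r {(i, z0)} (Xst x i B p q σ τ) = Xst x i B p q (σ / 2) τ := by
  have hz0pos : Xst x i B p q σ τ z0 = lin p q 0 := by
    rw [Xst_apply_other hz0i hz0B, hxz0, lin_zero]
  have hdist : ‖Xst x i B p q σ τ i - Xst x i B p q σ τ z0‖ ≤ r i := by
    rw [Xst_apply_i, hz0pos, norm_lin_sub]
    have : |σ - 0| ≤ 1 := by rw [abs_of_nonneg (by linarith)]; linarith
    calc |σ - 0| * ‖p - q‖ ≤ 1 * ‖p - q‖ :=
          mul_le_mul_of_nonneg_right this (norm_nonneg _)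
      _ ≤ r i := by rw [one_mul]; exact hri
  funext k
  by_cases hk : k = i
  · subst hk
    rw [step_of_nbr_single (nbr_pair_self hz0i hdist), Xst_apply_i, hz0pos, mid_lin]
    rw [Xst_apply_i]
    norm_num
  · rw [step_of_nbr_empty (nbr_pair_other hk)]
    by_cases hkB : k ∈ B
    · rw [Xst_apply_mem hiB hkB, Xst_apply_mem hiB hkB]
    · rw [Xst_apply_other hk hkB, Xst_apply_other hk hkB]

/-- Scout halving step back towards the blob. -/
lemma step_back (hiB : i ∉ B) {k0 : Fin n} (hk0 : k0 ∈ B)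
    (hστ : |σ - τ| * ‖p - q‖ ≤ r i) :
    step r {(i, k0)} (Xst x i B p q σ τ) = Xst x i B p q ((σ + τ) / 2) τ := by
  have hk0i : k0 ≠ i := fun h => hiB (h ▸ hk0)
  have hdist : ‖Xst x i B p q σ τ i - Xst x i B p q σ τ k0‖ ≤ r i := by
    rw [Xst_apply_i, Xst_apply_mem hiB hk0, norm_lin_sub]; exact hστ
  funext k
  by_cases hk : k = i
  · subst hk
    rw [step_of_nbr_single (nbr_pair_self hk0i hdist), Xst_apply_i,
      Xst_apply_mem hiB hk0, mid_lin, Xst_apply_i]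
  · rw [step_of_nbr_empty (nbr_pair_other hk)]
    by_cases hkB : k ∈ B
    · rw [Xst_apply_mem hiB hkB, Xst_apply_mem hiB hkB]
    · rw [Xst_apply_other hk hkB, Xst_apply_other hk hkB]

/-- Blob jump towards the scout. -/
lemma step_jump (hiB : i ∉ B) {ρn : ℝ} (hρ : ∀ k, ρn ≤ r k)
    (hj : |τ - σ| * ‖p - q‖ ≤ ρn) :
    step r (B ×ˢ {i}) (Xst x i B p q σ τ) = Xst x i B p q σ ((σ + τ) / 2) := by
  funext k
  by_cases hk : k = i
  · subst hk
    rw [step_of_nbr_empty (nbr_fan_nonmem hiB), Xst_apply_i, Xst_apply_i]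
  · by_cases hkB : k ∈ B
    · have hdist : ‖Xst x i B p q σ τ k - Xst x i B p q σ τ i‖ ≤ r k := by
        rw [Xst_apply_i, Xst_apply_mem hiB hkB, norm_lin_sub]
        exact le_trans hj (hρ k)
      rw [step_of_nbr_single (nbr_fan_mem hiB hkB hdist), Xst_apply_mem hiB hkB,
        Xst_apply_i, mid_lin, Xst_apply_mem hiB hkB]
      norm_num [add_comm]
    · rw [step_of_nbr_empty (nbr_fan_nonmem hkB), Xst_apply_other hk hkB,
        Xst_apply_other hk hkB]

end CrossSteps


section Crossing

variable {r : Fin n → ℝ} {x : Fin n → EuclideanSpace ℝ (Fin d)}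
variable {i z0 : Fin n} {B : Finset (Fin n)} {p q : EuclideanSpace ℝ (Fin d)}

lemma pair_offdiag {a b : Fin n} (h : b ≠ a) :
    ({(a, b)} : Finset (Fin n × Fin n)) ⊆ (Finset.univ : Finset (Fin n)).offDiag := by
  intro e he
  rw [Finset.mem_singleton] at he
  subst he
  exact Finset.mem_offDiag.mpr ⟨Finset.mem_univ _, Finset.mem_univ _, fun hh => h hh.symm⟩

lemma fan_offdiag (hiB : i ∉ B) :
    B ×ˢ {i} ⊆ (Finset.univ : Finset (Fin n)).offDiag := by
  intro e he
  rw [Finset.mem_product, Finset.mem_singleton] at he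
  refine Finset.mem_offDiag.mpr ⟨Finset.mem_univ _, Finset.mem_univ _, fun hh => ?_⟩
  rw [he.2] at hh
  exact hiB (hh ▸ he.1)

lemma clique_offdiag (S : Finset (Fin n)) :
    S.offDiag ⊆ (Finset.univ : Finset (Fin n)).offDiag := by
  intro e he
  rw [Finset.mem_offDiag] at he ⊢
  exact ⟨Finset.mem_univ _, Finset.mem_univ _, he.2.2⟩

/-- Back-halving of the scout towards the blob, until the gap is at most `ρn`. -/
lemma backh (hiB : i ∉ B) (hB : B.Nonempty) (hri : ‖p - q‖ ≤ r i)
    {ρn τ : ℝ} (hτ1 : τ ≤ 1) :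
    ∀ s : ℕ, ∀ σ : ℝ, 0 ≤ σ → σ ≤ τ → (τ - σ) * ‖p - q‖ ≤ 2 ^ s * ρn →
    ∃ σ' L, Reach r (Xst x i B p q σ τ) (Xst x i B p q σ' τ) L ∧ L ≤ s ∧
      σ ≤ σ' ∧ σ' ≤ τ ∧ (τ - σ') * ‖p - q‖ ≤ ρn ∧
      (σ' = σ ∨ ρn / 2 < (τ - σ') * ‖p - q‖) := by
  have hD0 : (0:ℝ) ≤ ‖p - q‖ := norm_nonneg _
  intro s
  induction s with
  | zero =>
    intro σ h0 hστ hgap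
    rw [pow_zero, one_mul] at hgap
    exact ⟨σ, 0, Reach.refl _, le_refl _, le_refl _, hστ, hgap, Or.inl rfl⟩
  | succ s ih =>
    intro σ h0 hστ hgap
    by_cases hc : (τ - σ) * ‖p - q‖ ≤ ρn
    · exact ⟨σ, 0, Reach.refl _, Nat.zero_le _, le_refl _, hστ, hc, Or.inl rfl⟩
    · push_neg at hc
      obtain ⟨k0, hk0⟩ := hB
      set σ1 : ℝ := (σ + τ) / 2 with hσ1
      have hstep : step r {(i, k0)} (Xst x i B p q σ τ) = Xst x i B p q σ1 τ := by
        refine step_back hiB hk0 ?_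
        have habs : |σ - τ| = τ - σ := by
          rw [abs_sub_comm, abs_of_nonneg (by linarith)]
        rw [habs]
        calc (τ - σ) * ‖p - q‖ ≤ 1 * ‖p - q‖ :=
              mul_le_mul_of_nonneg_right (by linarith) hD0
          _ ≤ r i := by rw [one_mul]; exact hri
      have hk0i : k0 ≠ i := fun h => hiB (h ▸ hk0)
      have hreach1 : Reach r (Xst x i B p q σ τ) (Xst x i B p q σ1 τ) 1 := by
        rw [← hstep]; exact Reach.single _ (pair_offdiag hk0i)
      have hgap1 : (τ - σ1) * ‖p - q‖ ≤ 2 ^ s * ρn := by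
        have e1 : (τ - σ1) * ‖p - q‖ = ((τ - σ) * ‖p - q‖) / 2 := by
          rw [hσ1]; ring
        rw [pow_succ] at hgap
        linarith
      obtain ⟨σ', L, hR, hL, hσ'1, hσ'2, hσ'3, hσ'4⟩ :=
        ih σ1 (by rw [hσ1]; linarith) (by rw [hσ1]; linarith) hgap1
      refine ⟨σ', 1 + L, hreach1.trans hR, by omega, by linarith,
        hσ'2, hσ'3, Or.inr ?_⟩
      rcases hσ'4 with h | h
      · subst h
        have e1 : (τ - σ1) * ‖p - q‖ = ((τ - σ) * ‖p - q‖) / 2 := by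
          rw [hσ1]; ring
        linarith
      · exact h

/-- The main crossing: the scout leads the blob across to within `ρn` of the target. -/
lemma cross (hiB : i ∉ B) (hz0B : z0 ∉ B) (hz0i : z0 ≠ i) (hxz0 : x z0 = q)
    (hri : ‖p - q‖ ≤ r i) (hD2 : ‖p - q‖ ≤ 2)
    {ρn : ℝ} (hρpos : 0 < ρn) (hρ : ∀ k, ρn ≤ r k)
    {Cn : ℕ} (hCn : 2 ≤ 2 ^ Cn * ρn) :
    ∀ fuel : ℕ, ∀ σ τ : ℝ, 0 ≤ σ → σ ≤ τ → τ ≤ 1 → (B = ∅ → σ = τ) →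
    τ * ‖p - q‖ - ρn ≤ fuel * (3 / 8 * ρn) →
    ∃ σ' τ' L, Reach r (Xst x i B p q σ τ) (Xst x i B p q σ' τ') L ∧
      L ≤ fuel * (Cn + 3) ∧ 0 ≤ σ' ∧ σ' ≤ τ' ∧ τ' ≤ τ ∧ τ' * ‖p - q‖ ≤ ρn := by
  have hD0 : (0:ℝ) ≤ ‖p - q‖ := norm_nonneg _
  intro fuel
  induction fuel with
  | zero =>
    intro σ τ h0 hστ hτ1 hBeq hfuel
    refine ⟨σ, τ, 0, Reach.refl _, Nat.zero_le _, h0, hστ, le_refl _, ?_⟩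
    simpa using hfuel
  | succ fuel ih =>
    intro σ τ h0 hστ hτ1 hBeq hfuel
    by_cases hend : τ * ‖p - q‖ ≤ ρn
    · exact ⟨σ, τ, 0, Reach.refl _, Nat.zero_le _, h0, hστ, le_refl _, hend⟩
    · push_neg at hend
      by_cases hBe : B = ∅
      · -- lone scout: a single halving makes definite progress
        have hsig : σ = τ := hBeq hBe
        have hstep : step r {(i, z0)} (Xst x i B p q σ τ) = Xst x i B p q (σ/2) τ :=
          step_scout hiB hz0B hz0i hxz0 h0 (le_trans hστ hτ1) hri
        have hreach1 : Reach r (Xst x i B p q σ τ) (Xst x i B p q (σ/2) τ) 1 := by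
          rw [← hstep]; exact Reach.single _ (pair_offdiag hz0i)
        have hXeq : Xst x i B p q (σ/2) τ = Xst x i B p q (σ/2) (σ/2) := by
          funext k
          by_cases hk : k = i
          · simp [Xst, hk]
          · simp [Xst, hk, hBe]
        obtain ⟨σ', τ', L, hR, hL, h1', h2', h3', h4'⟩ :=
          ih (σ/2) (σ/2) (by linarith) (le_refl _) (by linarith) (fun _ => rfl) (by
            have e : σ/2 * ‖p - q‖ = τ * ‖p - q‖ / 2 := by rw [hsig]; ring
            push_cast at hfuel ⊢
            linarith)
        refine ⟨σ', τ', 1 + L, ?_, ?_, h1', h2', ?_, h4'⟩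
        · exact (hXeq ▸ hreach1).trans hR
        · have h2 : (fuel+1)*(Cn+3) = fuel*(Cn+3) + (Cn+3) := by ring
          omega
        · linarith
      · -- scout positioning and two blob jumps
        have hB : B.Nonempty := Finset.nonempty_iff_ne_empty.mpr hBe
        have hstep : step r {(i, z0)} (Xst x i B p q σ τ) = Xst x i B p q (σ/2) τ :=
          step_scout hiB hz0B hz0i hxz0 h0 (le_trans hστ hτ1) hri
        have hreach1 : Reach r (Xst x i B p q σ τ) (Xst x i B p q (σ/2) τ) 1 := by
          rw [← hstep]; exact Reach.single _ (pair_offdiag hz0i)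
        have hgap0 : (τ - σ/2) * ‖p - q‖ ≤ 2 ^ Cn * ρn := by
          calc (τ - σ/2) * ‖p - q‖ ≤ 1 * ‖p - q‖ :=
                mul_le_mul_of_nonneg_right (by linarith) hD0
            _ ≤ 2 := by rw [one_mul]; exact hD2
            _ ≤ 2 ^ Cn * ρn := hCn
        obtain ⟨σ2, L1, hR1, hL1, hσ2a, hσ2b, hσ2c, hσ2d⟩ :=
          backh hiB hB hri hτ1 Cn (σ/2) (by linarith) (by linarith) hgap0
        have hgap_lb : ρn / 2 < (τ - σ2) * ‖p - q‖ := by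
          rcases hσ2d with h | h
          · rw [h]
            have h1 : τ / 2 ≤ τ - σ/2 := by linarith
            have h2 : (τ/2) * ‖p - q‖ ≤ (τ - σ/2) * ‖p - q‖ :=
              mul_le_mul_of_nonneg_right h1 hD0
            nlinarith
          · exact h
        set τ1 : ℝ := (σ2 + τ) / 2 with hτ1def
        set τ2 : ℝ := (σ2 + τ1) / 2 with hτ2def
        have habs1 : |τ - σ2| = τ - σ2 := abs_of_nonneg (by linarith)
        have hjump1 : step r (B ×ˢ {i}) (Xst x i B p q σ2 τ) =
            Xst x i B p q σ2 τ1 := by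
          rw [step_jump hiB hρ (by rw [habs1]; exact hσ2c)]
        have habs2 : |τ1 - σ2| = τ1 - σ2 := abs_of_nonneg (by rw [hτ1def]; linarith)
        have hjump2 : step r (B ×ˢ {i}) (Xst x i B p q σ2 τ1) =
            Xst x i B p q σ2 τ2 := by
          rw [step_jump hiB hρ ?_]
          rw [habs2]
          have e1 : (τ1 - σ2) * ‖p - q‖ = ((τ - σ2) * ‖p - q‖) / 2 := by
            rw [hτ1def]; ring
          linarith
        have hreachJ : Reach r (Xst x i B p q σ2 τ) (Xst x i B p q σ2 τ2) 2 := by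
          have j1 : Reach r (Xst x i B p q σ2 τ) (Xst x i B p q σ2 τ1) 1 := by
            rw [← hjump1]; exact Reach.single _ (fan_offdiag hiB)
          have j2 : Reach r (Xst x i B p q σ2 τ1) (Xst x i B p q σ2 τ2) 1 := by
            rw [← hjump2]; exact Reach.single _ (fan_offdiag hiB)
          exact j1.trans j2
        have hτ2τ : τ2 = τ - 3/4 * (τ - σ2) := by rw [hτ2def, hτ1def]; ring
        obtain ⟨σ', τ', L2, hR2, hL2, h1', h2', h3', h4'⟩ :=
          ih σ2 τ2 (by linarith) (by rw [hτ2τ]; linarith) (by rw [hτ2τ]; linarith)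
            (fun h => absurd h hBe) (by
              have e2 : τ2 * ‖p - q‖ = τ * ‖p - q‖ - 3/4 * ((τ - σ2) * ‖p - q‖) := by
                rw [hτ2τ]; ring
              push_cast at hfuel ⊢
              nlinarith)
        refine ⟨σ', τ', 1 + L1 + 2 + L2, ?_, ?_, h1', h2', ?_, h4'⟩
        · exact ((hreach1.trans hR1).trans hreachJ).trans hR2
        · have h2 : (fuel+1)*(Cn+3) = fuel*(Cn+3) + (Cn+3) := by ring
          omega
        · rw [hτ2τ] at h3'
          linarith

end Crossing


/-- A full merge of the position-classes of two violating agents. -/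
lemma merge {r : Fin n → ℝ} {x : Fin n → EuclideanSpace ℝ (Fin d)}
    {ρn : ℝ} (hρpos : 0 < ρn) (hρ : ∀ k, ρn ≤ r k) {Cn Kb : ℕ}
    (hCn : 2 ≤ 2 ^ Cn * ρn) (hKb : 2 - ρn ≤ Kb * (3 / 8 * ρn))
    {i j : Fin n} (hx : ∀ k, ‖x k‖ ≤ 1) (hij : x i ≠ x j) (hrij : ‖x i - x j‖ ≤ r i) :
    ∃ y L, Reach r x y L ∧ L ≤ Kb * (Cn + 3) + 1 ∧
      (Finset.image y Finset.univ).card + 1 ≤ (Finset.image x Finset.univ).card := by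
  classical
  set p := x i with hp
  set q := x j with hq
  have hpq : p ≠ q := hij
  have hD0 : (0:ℝ) ≤ ‖p - q‖ := norm_nonneg _
  have hD2 : ‖p - q‖ ≤ 2 := by
    calc ‖p - q‖ ≤ ‖p‖ + ‖q‖ := norm_sub_le _ _
      _ ≤ 2 := by have := hx i; have := hx j; rw [← hp, ← hq] at *; linarith
  set B : Finset (Fin n) := Finset.univ.filter (fun k => x k = p ∧ k ≠ i) with hB
  have hiB : i ∉ B := by simp [hB]
  have hji : j ≠ i := by
    intro h; apply hij; rw [hp, hq, h]
  have hjB : j ∉ B := by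
    simp only [hB, Finset.mem_filter, Finset.mem_univ, true_and, not_and]
    intro h1 _
    exact hpq (h1.symm.trans hq.symm)
  have hxj : x j = q := rfl
  have hX11 : Xst x i B p q 1 1 = x := by
    funext k
    by_cases hk : k = i
    · subst hk; rw [Xst_apply_i, lin_one]
    · by_cases hkB : k ∈ B
      · rw [Xst_apply_mem hiB hkB, lin_one]
        have : x k = p := (Finset.mem_filter.mp hkB).2.1
        rw [this]
      · rw [Xst_apply_other hk hkB]
  obtain ⟨σ', τ', L1, hR1, hL1, hσ'0, hστ', hτ'1, hτ'ρ⟩ :=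
    cross hiB hjB hji hxj hrij hD2 hρpos hρ hCn Kb 1 1 (by norm_num) (le_refl _)
      (le_refl _) (fun _ => rfl) (by push_cast; nlinarith)
  set y1 := Xst x i B p q σ' τ' with hy1
  -- the final clique
  set S : Finset (Fin n) := Finset.univ.filter (fun k => x k = p ∨ x k = q) with hS
  have hmemS : ∀ k, k ∈ S ↔ (x k = p ∨ x k = q) := by
    intro k; simp [hS]
  have hiS : i ∈ S := (hmemS i).mpr (Or.inl rfl)
  have hkey : ∀ k ∈ S, ∃ c, y1 k = lin p q c ∧ 0 ≤ c ∧ c ≤ τ' := by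
    intro k hk
    by_cases hki : k = i
    · subst hki
      exact ⟨σ', Xst_apply_i, hσ'0, hστ'⟩
    · by_cases hkB : k ∈ B
      · exact ⟨τ', Xst_apply_mem hiB hkB, le_trans hσ'0 hστ', le_refl _⟩
      · have hxk : x k = q := by
          rcases (hmemS k).mp hk with h | h
          · exact absurd (Finset.mem_filter.mpr ⟨Finset.mem_univ _, h, hki⟩) hkB
          · exact h
        refine ⟨0, ?_, le_refl _, le_trans hσ'0 hστ'⟩
        rw [hy1, Xst_apply_other hki hkB, hxk, lin_zero]
  have hdists : ∀ k ∈ S, ∀ l ∈ S, ‖y1 k - y1 l‖ ≤ r k := by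
    intro k hk l hl
    obtain ⟨c, hc, hc0, hcτ⟩ := hkey k hk
    obtain ⟨c', hc', hc'0, hc'τ⟩ := hkey l hl
    rw [hc, hc', norm_lin_sub]
    have h1 : |c - c'| ≤ τ' := abs_le.mpr ⟨by linarith, by linarith⟩
    calc |c - c'| * ‖p - q‖ ≤ τ' * ‖p - q‖ := mul_le_mul_of_nonneg_right h1 hD0
      _ ≤ ρn := hτ'ρ
      _ ≤ r k := hρ k
  set c0 := ((S.card : ℝ))⁻¹ • ∑ l ∈ S, y1 l with hc0
  set y : Fin n → EuclideanSpace ℝ (Fin d) :=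
    fun k => if x k = p ∨ x k = q then c0 else x k with hy
  have hstepS : step r S.offDiag y1 = y := by
    funext k
    by_cases hk : k ∈ S
    · rw [step_clique hk (hdists k hk), hy]
      simp only [(hmemS k).mp hk, if_pos]
      exact hc0.symm
    · rw [step_of_nbr_empty (nbr_clique_nonmem hk)]
      have hxk := (hmemS k).not.mp hk
      push_neg at hxk
      have hki : k ≠ i := by intro h; subst h; exact hxk.1 rfl
      have hkB : k ∉ B := by
        simp only [hB, Finset.mem_filter, Finset.mem_univ, true_and, not_and]
        intro h; exact absurd h hxk.1
      rw [hy]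
      simp only [hxk.1, hxk.2, or_self, if_false]
      exact Xst_apply_other hki hkB
  have hR2 : Reach r y1 y 1 := by
    rw [← hstepS]; exact Reach.single _ (clique_offdiag S)
  have hRtot : Reach r x y (L1 + 1) := by
    rw [← hX11]; exact hR1.trans hR2
  refine ⟨y, L1 + 1, hRtot, by omega, ?_⟩
  -- the image card decreases
  have hsubpq : ({p, q} : Finset (EuclideanSpace ℝ (Fin d))) ⊆
      Finset.image x Finset.univ := by
    intro v hv
    rcases Finset.mem_insert.mp hv with h | h
    · subst h; exact Finset.mem_image.mpr ⟨i, Finset.mem_univ _, rfl⟩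
    · rw [Finset.mem_singleton] at h; subst h
      exact Finset.mem_image.mpr ⟨j, Finset.mem_univ _, rfl⟩
  have h2le : 2 ≤ (Finset.image x Finset.univ).card := by
    calc 2 = ({p, q} : Finset (EuclideanSpace ℝ (Fin d))).card :=
          (Finset.card_pair hpq).symm
      _ ≤ _ := Finset.card_le_card hsubpq
  have himg : Finset.image y Finset.univ ⊆
      insert c0 ((Finset.image x Finset.univ) \ {p, q}) := by
    intro v hv
    obtain ⟨k, -, hk⟩ := Finset.mem_image.mp hv
    by_cases hkS : x k = p ∨ x k = q
    · have : y k = c0 := by rw [hy]; simp only [hkS, if_pos]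
      rw [← hk, this]
      exact Finset.mem_insert_self _ _
    · have hyk : y k = x k := by rw [hy]; simp only [if_neg hkS]
      push_neg at hkS
      refine Finset.mem_insert_of_mem (Finset.mem_sdiff.mpr ⟨?_, ?_⟩)
      · rw [← hk, hyk]; exact Finset.mem_image.mpr ⟨k, Finset.mem_univ _, rfl⟩
      · rw [← hk, hyk]
        simp only [Finset.mem_insert, Finset.mem_singleton]
        push_neg
        exact hkS
  have hcard1 : (Finset.image y Finset.univ).card ≤
      ((Finset.image x Finset.univ) \ {p, q}).card + 1 :=
    le_trans (Finset.card_le_card himg) (Finset.card_insert_le _ _)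
  have hcard2 : ((Finset.image x Finset.univ) \ {p, q}).card =
      (Finset.image x Finset.univ).card - 2 := by
    rw [Finset.card_sdiff_of_subset hsubpq, Finset.card_pair hpq]
  omega


/-- The target condition (E1). -/
def E1cond (r : Fin n → ℝ) (y : Fin n → EuclideanSpace ℝ (Fin d)) : Prop :=
  ∀ i j : Fin n, i ≠ j → y i = y j ∨ max (r i) (r j) < ‖y i - y j‖

/-- The outer loop: merging classes one at a time until (E1) holds. -/
lemma outer {r : Fin n → ℝ} {ρn : ℝ} (hρpos : 0 < ρn) (hρ : ∀ k, ρn ≤ r k)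
    {Cn Kb : ℕ} (hCn : 2 ≤ 2 ^ Cn * ρn) (hKb : 2 - ρn ≤ Kb * (3 / 8 * ρn)) :
    ∀ m : ℕ, ∀ x : Fin n → EuclideanSpace ℝ (Fin d), (∀ k, ‖x k‖ ≤ 1) →
    (Finset.image x Finset.univ).card ≤ m + 1 →
    ∃ y L, Reach r x y L ∧ L ≤ m * (Kb * (Cn + 3) + 1) ∧ E1cond r y := by
  intro m
  induction m with
  | zero =>
    intro x hx hcard
    refine ⟨x, 0, Reach.refl _, Nat.zero_le _, ?_⟩
    intro i j hij
    left
    have h1 : x i ∈ Finset.image x Finset.univ := Finset.mem_image_of_mem _ (Finset.mem_univ _)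
    have h2 : x j ∈ Finset.image x Finset.univ := Finset.mem_image_of_mem _ (Finset.mem_univ _)
    exact Finset.card_le_one.mp hcard _ h1 _ h2
  | succ m ih =>
    intro x hx hcard
    by_cases hE : E1cond r x
    · exact ⟨x, 0, Reach.refl _, Nat.zero_le _, hE⟩
    · rw [E1cond] at hE
      push_neg at hE
      obtain ⟨i, j, hij, hne, hlt⟩ := hE
      have hmerge : ∃ y1 L1, Reach r x y1 L1 ∧ L1 ≤ Kb * (Cn + 3) + 1 ∧
          (Finset.image y1 Finset.univ).card + 1 ≤ (Finset.image x Finset.univ).card := by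
        rcases max_cases (r i) (r j) with ⟨hmax, -⟩ | ⟨hmax, -⟩
        · exact merge hρpos hρ hCn hKb hx hne (by rw [← hmax]; exact hlt)
        · refine merge hρpos hρ hCn hKb hx (Ne.symm hne) ?_
          rw [norm_sub_rev, ← hmax]
          exact hlt
      obtain ⟨y1, L1, hR1, hL1, hcard1⟩ := hmerge
      obtain ⟨y, L2, hR2, hL2, hE1⟩ := ih y1 (hR1.norm_le hx) (by omega)
      refine ⟨y, L1 + L2, hR1.trans hR2, ?_, hE1⟩
      have : (m+1) * (Kb * (Cn + 3) + 1) = m * (Kb * (Cn + 3) + 1) + (Kb * (Cn + 3) + 1) := by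
        ring
      omega


/-! ### Numerical logarithm estimates -/

lemma log3_le : Real.log 3 ≤ 1.0987 := by
  have h1 : Real.log (3 ^ 12 : ℝ) = 12 * Real.log 3 := by
    rw [Real.log_pow]; norm_num
  have h2 : ((3:ℝ) ^ 12) = (531441/524288 : ℝ) * 2 ^ 19 := by norm_num
  have h3 : Real.log ((531441/524288 : ℝ) * 2 ^ 19)
      = Real.log (531441/524288 : ℝ) + 19 * Real.log 2 := by
    rw [Real.log_mul (by norm_num) (by positivity), Real.log_pow]
    norm_num
  have h4 : Real.log (531441/524288 : ℝ) ≤ 531441/524288 - 1 :=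
    Real.log_le_sub_one_of_pos (by norm_num)
  have h5 : Real.log 2 < 0.6931471808 := Real.log_two_lt_d9
  have h6 : 12 * Real.log 3 ≤ (531441/524288 - 1) + 19 * 0.6931471808 := by
    rw [← h1, h2, h3]
    linarith
  linarith

lemma log5_le : Real.log 5 ≤ 1.6174 := by
  have h1 : Real.log ((5:ℝ) ^ 3) = 3 * Real.log 5 := by
    rw [Real.log_pow]; norm_num
  have h2 : Real.log ((5:ℝ) ^ 3) ≤ Real.log ((2:ℝ) ^ 7) := by
    apply Real.log_le_log (by norm_num)
    norm_num
  have h3 : Real.log ((2:ℝ) ^ 7) = 7 * Real.log 2 := by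
    rw [Real.log_pow]; norm_num
  have h5 : Real.log 2 < 0.6931471808 := Real.log_two_lt_d9
  linarith

lemma log6_le : Real.log 6 ≤ 1.7919 := by
  have h1 : Real.log (6:ℝ) = Real.log 2 + Real.log 3 := by
    rw [show (6:ℝ) = 2 * 3 by norm_num, Real.log_mul (by norm_num) (by norm_num)]
  have h5 : Real.log 2 < 0.6931471808 := Real.log_two_lt_d9
  linarith [log3_le]

lemma log7_le : Real.log 7 ≤ 1.9461 := by
  have h1 : Real.log ((7:ℝ) ^ 2) = 2 * Real.log 7 := by
    rw [Real.log_pow]; norm_num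
  have h2 : ((7:ℝ) ^ 2) = (49/48 : ℝ) * (2 ^ 4 * 3) := by norm_num
  have h3 : Real.log ((49/48 : ℝ) * (2 ^ 4 * 3))
      = Real.log (49/48 : ℝ) + (4 * Real.log 2 + Real.log 3) := by
    rw [Real.log_mul (by norm_num) (by positivity),
      Real.log_mul (by positivity) (by norm_num), Real.log_pow]
    norm_num
  have h4 : Real.log (49/48 : ℝ) ≤ 49/48 - 1 :=
    Real.log_le_sub_one_of_pos (by norm_num)
  have h5 : Real.log 2 < 0.6931471808 := Real.log_two_lt_d9
  have h6 : 2 * Real.log 7 ≤ (49/48 - 1) + (4 * 0.6931471808 + 1.0987) := by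
    rw [← h1, h2, h3]
    linarith [log3_le]
  linarith

/-- The key estimate `g(n) = n + 5/3 - 2 log (n+2) ≥ (69/100)(n-1)`. -/
lemma gbound : ∀ N : ℕ, 3 ≤ N →
    (69/100) * ((N:ℝ) - 1) ≤ (N:ℝ) + 5/3 - 2 * Real.log ((N:ℝ) + 2) := by
  have aux : ∀ N : ℕ, 5 ≤ N →
      (69/100) * ((N:ℝ) - 1) ≤ (N:ℝ) + 5/3 - 2 * Real.log ((N:ℝ) + 2) := by
    intro N hN
    induction N, hN using Nat.le_induction with
    | base =>
      have : ((5:ℕ):ℝ) + 2 = 7 := by norm_num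
      rw [this]
      push_cast
      linarith [log7_le]
    | succ N hN ih =>
      have hpos : (0:ℝ) < (N:ℝ) + 2 := by positivity
      have h7 : (7:ℝ) ≤ (N:ℝ) + 2 := by
        have : (5:ℝ) ≤ (N:ℝ) := by exact_mod_cast hN
        linarith
      have hstep : Real.log ((N:ℝ) + 3) ≤ Real.log ((N:ℝ) + 2) + 1/((N:ℝ) + 2) := by
        have hd : Real.log (((N:ℝ) + 3)/((N:ℝ) + 2)) ≤ ((N:ℝ) + 3)/((N:ℝ) + 2) - 1 :=
          Real.log_le_sub_one_of_pos (by positivity)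
        rw [Real.log_div (by positivity) (by positivity)] at hd
        have he : ((N:ℝ) + 3)/((N:ℝ) + 2) - 1 = 1/((N:ℝ) + 2) := by
          field_simp
          norm_num
        linarith [he ▸ hd]
      have hinv : 1/((N:ℝ) + 2) ≤ 1/7 := by
        apply one_div_le_one_div_of_le <;> linarith
      push_cast
      push_cast at ih
      have : ((N:ℝ) + 1) + 2 = (N:ℝ) + 3 := by ring
      rw [this]
      linarith
  intro N hN
  rcases Nat.lt_or_ge N 5 with h | h
  · interval_cases N
    · have : ((3:ℕ):ℝ) + 2 = 5 := by norm_num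
      rw [this]
      push_cast
      linarith [log5_le]
    · have : ((4:ℕ):ℝ) + 2 = 6 := by norm_num
      rw [this]
      push_cast
      linarith [log6_le]
  · exact aux N h

set_option maxHeartbeats 1000000 in
/-- The final counting estimate. -/
lemma arith {n : ℕ} (hn : 3 ≤ n) {rn : ℝ} (h0 : 0 < rn) (h2 : rn < 2) :
    ((n - 1 : ℕ) : ℝ) * (((⌈(8/3 : ℝ) * (2/rn - 1)⌉₊ : ℕ) : ℝ) *
      (((⌈Real.logb 2 (2/rn)⌉ : ℤ).toNat : ℝ) + 3) + 1) < Tbound n rn := by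
  have hρ1 : (1:ℝ) < 2/rn := (one_lt_div h0).mpr h2
  set β : ℝ := 2/rn - 1 with hβ
  have hβpos : 0 < β := by rw [hβ]; linarith
  set C : ℤ := ⌈Real.logb 2 (2/rn)⌉ with hCdef
  have hC0 : 0 < C := Int.ceil_pos.mpr (Real.logb_pos (by norm_num) hρ1)
  have hC1 : (1:ℤ) ≤ C := hC0
  have hCR : (1:ℝ) ≤ (C:ℝ) := by exact_mod_cast hC1
  have htoNat : ((C.toNat : ℕ) : ℝ) = (C:ℝ) := by
    have h := Int.toNat_of_nonneg (le_of_lt hC0)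
    exact_mod_cast congrArg (fun z : ℤ => (z:ℝ)) h
  have hKlt : ((⌈(8/3:ℝ) * β⌉₊ : ℕ):ℝ) < (8/3) * β + 1 :=
    Nat.ceil_lt_add_one (by positivity)
  have hA : ((n-1:ℕ):ℝ) = (n:ℝ) - 1 := by
    rw [Nat.cast_sub (by omega)]; norm_num
  have hA2 : (2:ℝ) ≤ (n:ℝ) - 1 := by
    have : (3:ℝ) ≤ (n:ℝ) := by exact_mod_cast hn
    linarith
  set g : ℝ := (n:ℝ) + 5/3 - 2 * Real.log ((n:ℝ) + 2) with hgdef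
  have hg : (69/100) * ((n:ℝ) - 1) ≤ g := gbound n hn
  have hTb : Tbound n rn = (3*(n:ℝ) - 2 + 8 * β * g) * ((C:ℝ) + 1) + (n:ℝ) - 2 := by
    rw [Tbound, hβ, hgdef, hCdef]
  rw [htoNat, hA, hTb]
  have hstep1 : ((⌈(8/3:ℝ) * β⌉₊ : ℕ):ℝ) * ((C:ℝ) + 3) + 1 <
      ((8/3) * β + 1) * ((C:ℝ) + 3) + 1 := by
    have h3 : (0:ℝ) < (C:ℝ) + 3 := by linarith
    nlinarith
  have hstep2 : ((8/3) * β + 1) * ((C:ℝ) + 3) + 1 ≤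
      (3 + (138/25) * β) * ((C:ℝ) + 1) + 1 := by
    have hbc : β * 1 ≤ β * (C:ℝ) := mul_le_mul_of_nonneg_left hCR hβpos.le
    nlinarith
  have hstep3 : ((n:ℝ) - 1) * ((3 + (138/25) * β) * ((C:ℝ) + 1) + 1) ≤
      (3*(n:ℝ) - 2 + 8 * β * g) * ((C:ℝ) + 1) + (n:ℝ) - 2 := by
    have h8g : (138/25) * ((n:ℝ) - 1) ≤ 8 * g := by linarith
    have hc1 : (0:ℝ) ≤ (C:ℝ) + 1 := by linarith
    have hb1 := mul_le_mul_of_nonneg_left h8g hβpos.le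
    have hb2 := mul_le_mul_of_nonneg_right hb1 hc1
    have h1 : (138/25) * β * (((n:ℝ) - 1) * ((C:ℝ) + 1)) ≤ 8 * β * (g * ((C:ℝ) + 1)) := by
      linarith [hb2]
    have e1 : ((n:ℝ)-1) * ((3 + (138/25)*β) * ((C:ℝ)+1) + 1)
        = 3*((n:ℝ)-1)*((C:ℝ)+1) + (138/25)*β*(((n:ℝ)-1)*((C:ℝ)+1)) + ((n:ℝ)-1) := by
      ring
    have e2 : (3*(n:ℝ)-2+8*β*g)*((C:ℝ)+1) + (n:ℝ) - 2
        = 3*((n:ℝ)-1)*((C:ℝ)+1) + ((C:ℝ)+1) + 8*β*(g*((C:ℝ)+1)) + ((n:ℝ) - 2) := by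
      ring
    rw [e1, e2]
    linarith [h1]
  calc ((n:ℝ) - 1) * (((⌈(8/3:ℝ) * β⌉₊ : ℕ):ℝ) * ((C:ℝ) + 3) + 1)
      < ((n:ℝ) - 1) * (((8/3) * β + 1) * ((C:ℝ) + 3) + 1) := by
        apply mul_lt_mul_of_pos_left hstep1
        linarith
    _ ≤ ((n:ℝ) - 1) * ((3 + (138/25) * β) * ((C:ℝ) + 1) + 1) := by
        apply mul_le_mul_of_nonneg_left hstep2
        linarith
    _ ≤ (3*(n:ℝ) - 2 + 8 * β * g) * ((C:ℝ) + 1) + (n:ℝ) - 2 := by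
        linarith [hstep3]


end CIBC

set_option maxHeartbeats 1000000 in
/-- In the CIBC system, from any initial state in the product of unit
balls, a state satisfying (E1) can be reached in time `T < T_n` by a suitable choice of
control edge sets. -/
theorem cibc_convergence_time
    {n d : ℕ} (hn : 3 ≤ n) (hd : 1 ≤ d)
    (r : Fin n → ℝ) (hrpos : ∀ i, 0 < r i)
    (hrmono : ∀ i j : Fin n, i ≤ j → r j ≤ r i)
    (hrn : r ⟨n - 1, by omega⟩ < 2)
    (x0 : Fin n → EuclideanSpace ℝ (Fin d)) (hx0 : ∀ i, ‖x0 i‖ ≤ 1) :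
    ∃ (T : ℕ) (E : ℕ → Finset (Fin n × Fin n)),
      (T : ℝ) < Tbound n (r ⟨n - 1, by omega⟩) ∧
      (∀ s, s < T → E s ⊆ (Finset.univ : Finset (Fin n)).offDiag) ∧
      ∀ i j : Fin n, i ≠ j →
        traj r E x0 T i = traj r E x0 T j ∨
          max (r i) (r j) < ‖traj r E x0 T i - traj r E x0 T j‖ := by
  classical
  set rn : ℝ := r ⟨n - 1, by omega⟩ with hrn_def
  have hrnpos : 0 < rn := hrpos _
  have hρ : ∀ k, rn ≤ r k := by
    intro k
    apply hrmono
    rw [Fin.le_def]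
    have := k.isLt
    simp only []
    omega
  have hρ1 : (1:ℝ) < 2 / rn := (one_lt_div hrnpos).mpr hrn
  set Cn : ℕ := (⌈Real.logb 2 (2 / rn)⌉ : ℤ).toNat with hCn_def
  set Kb : ℕ := ⌈(8/3 : ℝ) * (2 / rn - 1)⌉₊ with hKb_def
  have hC0 : (0:ℤ) < ⌈Real.logb 2 (2 / rn)⌉ :=
    Int.ceil_pos.mpr (Real.logb_pos (by norm_num) hρ1)
  have htoNat : ((Cn : ℕ) : ℝ) = ((⌈Real.logb 2 (2 / rn)⌉ : ℤ) : ℝ) := by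
    rw [hCn_def]
    have h := Int.toNat_of_nonneg (le_of_lt hC0)
    exact_mod_cast congrArg (fun z : ℤ => (z:ℝ)) h
  have hCnfact : 2 ≤ 2 ^ Cn * rn := by
    have h1 : Real.logb 2 (2/rn) ≤ ((⌈Real.logb 2 (2 / rn)⌉ : ℤ) : ℝ) := Int.le_ceil _
    have h2 : (2:ℝ)/rn ≤ (2:ℝ) ^ (((⌈Real.logb 2 (2 / rn)⌉ : ℤ) : ℝ)) := by
      have he : (2:ℝ)/rn = (2:ℝ) ^ (Real.logb 2 (2/rn)) :=
        (Real.rpow_logb (by norm_num) (by norm_num) (by positivity)).symm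
      exact le_of_eq_of_le he (Real.rpow_le_rpow_of_exponent_le (by norm_num) h1)
    have h3 : (2:ℝ) ^ (((⌈Real.logb 2 (2 / rn)⌉ : ℤ) : ℝ)) = 2 ^ Cn := by
      rw [← htoNat, Real.rpow_natCast]
    rw [h3] at h2
    rw [div_le_iff₀ hrnpos] at h2
    linarith
  have hKbfact : 2 - rn ≤ (Kb : ℝ) * (3/8 * rn) := by
    have h1 : (8/3 : ℝ) * (2/rn - 1) ≤ (Kb : ℝ) := by rw [hKb_def]; exact Nat.le_ceil _
    have h2 : ((2:ℝ)/rn - 1) * rn = 2 - rn := by field_simp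
    have h3 := mul_le_mul_of_nonneg_right h1 (show (0:ℝ) ≤ 3/8 * rn by positivity)
    have h4 : (8/3 : ℝ) * (2/rn - 1) * (3/8 * rn) = (2/rn - 1) * rn := by ring
    rw [h4, h2] at h3
    exact h3
  obtain ⟨y, L, hR, hL, hE1⟩ :=
    CIBC.outer hrnpos hρ hCnfact hKbfact (n - 1) x0 hx0 (by
      have h1 : (Finset.image x0 Finset.univ).card ≤ n := by
        calc (Finset.image x0 Finset.univ).card ≤ Finset.univ.card :=
              Finset.card_image_le
          _ = n := by simp
      omega)
  obtain ⟨E, hEsub, hEtraj⟩ := hR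
  refine ⟨L, E, ?_, fun s _ => hEsub s, ?_⟩
  · have hcast : (L:ℝ) ≤ (((n - 1) * (Kb * (Cn + 3) + 1) : ℕ) : ℝ) := by
      exact_mod_cast hL
    have heq : (((n - 1) * (Kb * (Cn + 3) + 1) : ℕ) : ℝ)
        = ((n - 1 : ℕ) : ℝ) * ((Kb : ℝ) * ((Cn : ℝ) + 3) + 1) := by
      push_cast
      ring
    have harith := CIBC.arith hn hrnpos hrn
    rw [hKb_def, hCn_def] at *
    calc (L:ℝ) ≤ _ := hcast
      _ = _ := heq
      _ < _ := harith
  · intro i j hij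
    have := hE1 i j hij
    rw [hEtraj]
    exact this
end
end

section
/- Consider the CIBC system. Suppose at time 0 the agents C_α = {α_1,…,α_J} all share one opinion and the agents C_β = {β_1,…,β_K} all share another opinion, with confidence bounds satisfying r_{α_1} ≥ ⋯ ≥ r_{α_J}, r_{β_1} ≥ ⋯ ≥ r_{β_K}, r_{α_1} ≥ r_{β_1}, and with d(0) := ‖x_{α_1}(0) − x_{β_1}(0)‖ satisfying 0 < d(0) ≤ r_{α_1} and d(0) > r_min, where r_min := min_{i ∈ C_α ∪ C_β} r_i. Let t_1 := max{⌈log₂(d(0)/r_{β_K})⌉, 0}. Then there exist edge sets E'_0, E'_1, …, E'_{t_1} ⊆ {(i,j) : i,j ∈ C_α ∪ C_β, i ≠ j} such that, under the resulting dynamics, the maximum pairwise distance d(t_1+1) := max_{i,j ∈ C_α ∪ C_β} ‖x_i(t_1+1) − x_j(t_1+1)‖ satisfies d(t_1+1) < d(0) − r_min/(2(K+1)). -/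
open Finset MeasureTheory ProbabilityTheory Metric

noncomputable section

open scoped Classical

set_option maxHeartbeats 1000000

/-- One round of the merging procedure: if two clusters at distance
`d(0)` with `r_min < d(0) ≤ r_{α₁}` are given, then with suitable control edge sets the
maximum pairwise distance after `t₁ + 1` steps drops below `d(0) - r_min/(2(K+1))`,
where `t₁ = max{⌈log₂(d(0)/r_{β_K})⌉, 0}`. -/
theorem cibc_merge_one_round
    {n d : ℕ} (hn : 3 ≤ n) (hd : 1 ≤ d)
    (r : Fin n → ℝ) (hrpos : ∀ i, 0 < r i)
    (x0 : Fin n → EuclideanSpace ℝ (Fin d))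
    (Cα Cβ : Finset (Fin n)) (hCα : Cα.Nonempty) (hCβ : Cβ.Nonempty)
    -- confidence bounds are nonincreasing within each cluster, and `r_{α₁} ≥ r_{β₁}`
    (hrα : ∀ i ∈ Cα, ∀ j ∈ Cα, i ≤ j → r j ≤ r i)
    (hrβ : ∀ i ∈ Cβ, ∀ j ∈ Cβ, i ≤ j → r j ≤ r i)
    (hrαβ : r (Cβ.min' hCβ) ≤ r (Cα.min' hCα))
    -- all agents of `Cα` share one opinion, all agents of `Cβ` share another opinion
    (hαshare : ∀ i ∈ Cα, x0 i = x0 (Cα.min' hCα))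
    (hβshare : ∀ i ∈ Cβ, x0 i = x0 (Cβ.min' hCβ))
    (hdiff : x0 (Cα.min' hCα) ≠ x0 (Cβ.min' hCβ))
    -- `d(0) := ‖x_{α₁}(0) - x_{β₁}(0)‖` satisfies `0 < d(0) ≤ r_{α₁}` and `d(0) > r_min`
    (hd0pos : 0 < ‖x0 (Cα.min' hCα) - x0 (Cβ.min' hCβ)‖)
    (hd0 : ‖x0 (Cα.min' hCα) - x0 (Cβ.min' hCβ)‖ ≤ r (Cα.min' hCα))
    (hd0min : (Cα ∪ Cβ).inf' hCα.inl r < ‖x0 (Cα.min' hCα) - x0 (Cβ.min' hCβ)‖)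
    (t1 : ℕ)
    (ht1 : (t1 : ℤ) = max
      ⌈Real.logb 2 (‖x0 (Cα.min' hCα) - x0 (Cβ.min' hCβ)‖ / r (Cβ.max' hCβ))⌉ 0) :
    ∃ E' : ℕ → Finset (Fin n × Fin n),
      (∀ s, s ≤ t1 → E' s ⊆ (Cα ∪ Cβ).offDiag) ∧
      ∀ i ∈ Cα ∪ Cβ, ∀ j ∈ Cα ∪ Cβ,
        ‖traj r E' x0 (t1 + 1) i - traj r E' x0 (t1 + 1) j‖ <
          ‖x0 (Cα.min' hCα) - x0 (Cβ.min' hCβ)‖ -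
            (Cα ∪ Cβ).inf' hCα.inl r / (2 * ((Cβ.card : ℝ) + 1)) := by
  classical
  have hAmem : Cα.min' hCα ∈ Cα := Finset.min'_mem _ _
  have hBmem : Cβ.min' hCβ ∈ Cβ := Finset.min'_mem _ _
  have hBmmem : Cβ.max' hCβ ∈ Cβ := Finset.max'_mem _ _
  set A := Cα.min' hCα with hAdef
  set B := Cβ.min' hCβ with hBdef
  set Bm := Cβ.max' hCβ with hBmdef
  have hAnotβ : A ∉ Cβ := fun h => hdiff (hβshare A h)
  have hBneA : B ≠ A := fun h => hAnotβ (h ▸ hBmem)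
  set xA := x0 A with hxAdef
  set xB := x0 B with hxBdef
  set d0 := ‖xA - xB‖ with hd0def
  set K := Cβ.card with hKdef
  have hKpos : 0 < K := Finset.card_pos.mpr hCβ
  set rmin := (Cα ∪ Cβ).inf' hCα.inl r with hrmindef
  have hrminpos : 0 < rmin := by
    rw [hrmindef, Finset.lt_inf'_iff]; exact fun i _ => hrpos i
  have hrminBm : rmin ≤ r Bm := Finset.inf'_le _ (Finset.mem_union_right _ hBmmem)
  have hrBmb : ∀ b ∈ Cβ, r Bm ≤ r b := fun b hb => hrβ b hb Bm hBmmem (Finset.le_max' _ _ hb)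
  have hrBmA : r Bm ≤ r A := le_trans (hrBmb B hBmem) hrαβ
  -- arithmetic facts about ε = 2^{-t1}
  set ε : ℝ := ((2:ℝ)^t1)⁻¹ with hεdef
  have h2pow : (0:ℝ) < 2^t1 := by positivity
  have hεpos : 0 < ε := by positivity
  have h1le2pow : (1:ℝ) ≤ 2^t1 := one_le_pow₀ one_le_two
  have hεle1 : ε ≤ 1 := by
    rw [hεdef]; exact inv_le_one_of_one_le₀ h1le2pow
  have hdr : 0 < d0 / r Bm := div_pos hd0pos (hrpos Bm)
  have h2L : (2:ℝ) ^ Real.logb 2 (d0 / r Bm) = d0 / r Bm :=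
    Real.rpow_logb (by norm_num) (by norm_num) hdr
  have ht1geL : Real.logb 2 (d0 / r Bm) ≤ (t1:ℝ) := by
    have h1 : (⌈Real.logb 2 (d0 / r Bm)⌉ : ℤ) ≤ (t1:ℤ) := ht1 ▸ le_max_left _ _
    calc Real.logb 2 (d0 / r Bm) ≤ (⌈Real.logb 2 (d0 / r Bm)⌉:ℝ) := Int.le_ceil _
      _ ≤ ((t1:ℤ):ℝ) := by exact_mod_cast h1
      _ = (t1:ℝ) := by push_cast; ring
  have hcast : (2:ℝ)^((t1:ℝ)) = 2^t1 := Real.rpow_natCast 2 t1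
  have hdrle : d0 / r Bm ≤ 2^t1 := by
    have hmono : (2:ℝ) ^ Real.logb 2 (d0 / r Bm) ≤ (2:ℝ)^((t1:ℝ)) :=
      Real.rpow_le_rpow_of_exponent_le one_le_two ht1geL
    rwa [h2L, hcast] at hmono
  have hδleBm : ε * d0 ≤ r Bm := by
    rw [hεdef, inv_mul_le_iff₀ h2pow]
    exact (div_le_iff₀ (hrpos Bm)).mp hdrle
  have hδgt : rmin / 2 < ε * d0 := by
    rcases le_or_gt ⌈Real.logb 2 (d0 / r Bm)⌉ 0 with h | h
    · have ht10 : t1 = 0 := by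
        have := ht1; rw [max_eq_right h] at this; exact_mod_cast this
      rw [ht10] at hεdef
      simp only [pow_zero, inv_one] at hεdef
      rw [hεdef, one_mul]
      linarith [half_lt_self hrminpos]
    · have ht1e : ((t1:ℕ):ℝ) = (⌈Real.logb 2 (d0 / r Bm)⌉:ℝ) := by
        have : (t1:ℤ) = ⌈Real.logb 2 (d0 / r Bm)⌉ := by rw [ht1, max_eq_left h.le]
        exact_mod_cast this
      have hlt : ((t1:ℕ):ℝ) < Real.logb 2 (d0 / r Bm) + 1 := by
        rw [ht1e]; exact Int.ceil_lt_add_one _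
      have hpowlt : (2:ℝ)^t1 < d0 / r Bm * 2 := by
        have h1 : (2:ℝ)^((t1:ℝ)) < (2:ℝ)^(Real.logb 2 (d0 / r Bm) + 1) :=
          Real.rpow_lt_rpow_of_exponent_lt one_lt_two hlt
        rw [hcast, Real.rpow_add (by norm_num), h2L, Real.rpow_one] at h1
        exact h1
      have h' : (2:ℝ)^t1 * r Bm < 2 * d0 := by
        have := mul_lt_mul_of_pos_right hpowlt (hrpos Bm)
        rw [mul_comm (d0 / r Bm) 2, mul_assoc, div_mul_cancel₀ _ (ne_of_gt (hrpos Bm))] at this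
        exact this
      have hεd : ε * d0 = d0 / 2^t1 := by rw [hεdef]; ring
      rw [hεd]
      have h2 : r Bm / 2 < d0 / 2^t1 := by
        rw [div_lt_div_iff₀ (by norm_num) h2pow]; linarith
      linarith
  -- the control edge sets
  set Em : Finset (Fin n × Fin n) := (insert A Cβ).offDiag with hEmdef
  set E' : ℕ → Finset (Fin n × Fin n) :=
    fun s => if s < t1 then {(A, B)} else if s = t1 then Em else ∅ with hE'def
  have hsubins : insert A Cβ ⊆ Cα ∪ Cβ := by
    intro x hx
    rcases Finset.mem_insert.mp hx with rfl | hx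
    · exact Finset.mem_union_left _ hAmem
    · exact Finset.mem_union_right _ hx
  refine ⟨E', ?_, ?_⟩
  · intro s hs
    rw [hE'def]
    by_cases h : s < t1
    · simp only [if_pos h]
      intro p hp
      rw [Finset.mem_singleton] at hp
      subst hp
      rw [Finset.mem_offDiag]
      exact ⟨Finset.mem_union_left _ hAmem, Finset.mem_union_right _ hBmem, hBneA.symm⟩
    · have hst : s = t1 := le_antisymm hs (not_lt.mp h)
      simp only [if_neg h, if_pos hst, hEmdef]
      intro p hp
      rw [Finset.mem_offDiag] at hp ⊢
      exact ⟨hsubins hp.1, hsubins hp.2.1, hp.2.2⟩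
  -- trajectory during the halving phase
  have key : ∀ s, s ≤ t1 →
      (∀ i, i ≠ A → traj r E' x0 s i = x0 i) ∧
      traj r E' x0 s A = xB + ((2:ℝ)^s)⁻¹ • (xA - xB) := by
    intro s
    induction s with
    | zero =>
      intro _
      refine ⟨fun i _ => rfl, ?_⟩
      show x0 A = xB + ((2:ℝ)^0)⁻¹ • (xA - xB)
      rw [← hxAdef]; simp
    | succ s ih =>
      intro hs
      have hslt : s < t1 := hs
      obtain ⟨h1, h2⟩ := ih (le_of_lt hslt)
      have hE : E' s = {(A, B)} := by rw [hE'def]; simp only [if_pos hslt]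
      have htr : traj r E' x0 (s+1) = step r (E' s) (traj r E' x0 s) := rfl
      constructor
      · intro i hi
        have hnbr : nbr r (E' s) (traj r E' x0 s) i = ∅ := by
          rw [hE]
          ext j
          simp only [nbr, Finset.mem_filter, Finset.mem_univ, true_and,
            Finset.mem_singleton, Prod.mk.injEq, Finset.notMem_empty, iff_false, not_and]
          rintro hj ⟨hiA, hjB⟩
          exact absurd hiA hi
        rw [htr]
        simp only [step, hnbr, Finset.card_empty, Finset.sum_empty, Nat.cast_zero,
          add_zero, inv_one, one_smul]
        exact h1 i hi
      · have hdist : ‖traj r E' x0 s A - traj r E' x0 s B‖ ≤ r A := by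
          rw [h2, h1 B hBneA, ← hxBdef]
          have : xB + ((2:ℝ)^s)⁻¹ • (xA - xB) - xB = ((2:ℝ)^s)⁻¹ • (xA - xB) := by abel
          rw [this, norm_smul, Real.norm_eq_abs, abs_of_nonneg (by positivity), ← hd0def]
          have hp : (0:ℝ) < 2^s := by positivity
          have h1' : ((2:ℝ)^s)⁻¹ ≤ 1 := inv_le_one_of_one_le₀ (one_le_pow₀ one_le_two)
          have h2' : ((2:ℝ)^s)⁻¹ * d0 ≤ d0 := mul_le_of_le_one_left hd0pos.le h1'
          linarith
        have hnbrA : nbr r (E' s) (traj r E' x0 s) A = {B} := by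
          rw [hE]
          ext j
          simp only [nbr, Finset.mem_filter, Finset.mem_univ, true_and,
            Finset.mem_singleton]
          constructor
          · rintro ⟨-, h, -⟩
            exact congrArg Prod.snd h
          · rintro rfl
            exact ⟨hBneA, rfl, hdist⟩
        rw [htr]
        simp only [step, hnbrA, Finset.card_singleton, Finset.sum_singleton, Nat.cast_one]
        rw [h2, h1 B hBneA, ← hxBdef, pow_succ]
        module
  obtain ⟨h1, h2⟩ := key t1 le_rfl
  set X := traj r E' x0 t1 with hXdef
  set c : EuclideanSpace ℝ (Fin d) := xB + ε • (xA - xB) with hcdef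
  have hXA : X A = c := by rw [h2, hcdef, hεdef]
  have hXβ : ∀ j ∈ Cβ, X j = xB := fun j hj =>
    (h1 j (ne_of_mem_of_not_mem hj hAnotβ)).trans (hβshare j hj)
  have hEt1 : E' t1 = Em := by rw [hE'def]; simp
  have hnormc : ‖c - xB‖ = ε * d0 := by
    have : c - xB = ε • (xA - xB) := by rw [hcdef]; abel
    rw [this, norm_smul, Real.norm_eq_abs, abs_of_nonneg hεpos.le, ← hd0def]
  have htr1 : traj r E' x0 (t1+1) = step r (E' t1) X := rfl
  set q : EuclideanSpace ℝ (Fin d) := ((1:ℝ) + (K:ℝ))⁻¹ • (c + (K:ℕ) • xB) with hqdef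
  -- final positions
  have hfinalq : ∀ i, i = A ∨ i ∈ Cβ → traj r E' x0 (t1+1) i = q := by
    intro i hi
    rcases hi with rfl | hi
    · -- agent A
      have hnbrA : nbr r (E' t1) X A = Cβ := by
        rw [hEt1, hEmdef]
        ext j
        simp only [nbr, Finset.mem_filter, Finset.mem_univ, true_and, Finset.mem_offDiag,
          Finset.mem_insert]
        constructor
        · rintro ⟨hj, ⟨_, hj2, _⟩, _⟩
          rcases hj2 with rfl | hj2
          · exact absurd rfl hj
          · exact hj2
        · intro hj
          have hjA : j ≠ A := ne_of_mem_of_not_mem hj hAnotβ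
          refine ⟨hjA, ⟨by simp, by simp [hj], hjA.symm⟩, ?_⟩
          rw [hXA, hXβ j hj, hnormc]
          have : ε * d0 ≤ d0 := mul_le_of_le_one_left hd0pos.le hεle1
          linarith
      rw [htr1]
      simp only [step, hnbrA, ← hKdef]
      rw [hXA, Finset.sum_congr rfl hXβ, Finset.sum_const, hqdef]
    · -- agent b ∈ Cβ
      have hAnotin : A ∉ Cβ.erase i := fun h => hAnotβ (Finset.mem_of_mem_erase h)
      have hnbrb : nbr r (E' t1) X i = insert A (Cβ.erase i) := by
        rw [hEt1, hEmdef]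
        ext j
        simp only [nbr, Finset.mem_filter, Finset.mem_univ, true_and, Finset.mem_offDiag,
          Finset.mem_insert, Finset.mem_erase]
        constructor
        · rintro ⟨hj, ⟨_, hj2, _⟩, _⟩
          rcases hj2 with rfl | hj2
          · exact Or.inl rfl
          · exact Or.inr ⟨hj, hj2⟩
        · rintro (rfl | ⟨hj, hjβ⟩)
          · have hiA : i ≠ A := ne_of_mem_of_not_mem hi hAnotβ
            refine ⟨hiA.symm, ⟨by simp [hi], by simp, hiA⟩, ?_⟩
            rw [hXβ i hi, hXA, norm_sub_rev, hnormc]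
            exact le_trans hδleBm (hrBmb i hi)
          · refine ⟨hj, ⟨by simp [hi], by simp [hjβ], hj.symm⟩, ?_⟩
            rw [hXβ i hi, hXβ j hjβ]
            simp [le_of_lt (hrpos i)]
      have hcard : (insert A (Cβ.erase i)).card = K := by
        rw [Finset.card_insert_of_notMem hAnotin, Finset.card_erase_of_mem hi, ← hKdef]
        omega
      rw [htr1]
      simp only [step, hnbrb, hcard]
      rw [Finset.sum_insert hAnotin, hXA, Finset.sum_congr rfl
        (fun j hj => hXβ j (Finset.mem_of_mem_erase hj)), Finset.sum_const,
        Finset.card_erase_of_mem hi, hXβ i hi, ← hKdef, hqdef]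
      congr 1
      have hsm : (K - 1 + 1 : ℕ) • xB = (K-1:ℕ) • xB + xB := succ_nsmul xB (K-1)
      rw [Nat.sub_add_cancel hKpos] at hsm
      rw [hsm]; abel
  have hfinalα : ∀ i ∈ Cα, i ≠ A → traj r E' x0 (t1+1) i = xA := by
    intro i hiα hiA
    have hinotins : i ∉ insert A Cβ := by
      rw [Finset.mem_insert]
      rintro (rfl | h)
      · exact hiA rfl
      · exact hdiff ((hαshare i hiα).symm.trans (hβshare i h))
    have hnbr : nbr r (E' t1) X i = ∅ := by
      rw [hEt1, hEmdef]
      ext j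
      simp only [nbr, Finset.mem_filter, Finset.mem_univ, true_and, Finset.mem_offDiag,
        Finset.notMem_empty, iff_false, not_and]
      rintro hj ⟨hi1, _, _⟩
      exact absurd hi1 hinotins
    rw [htr1]
    simp only [step, hnbr, Finset.card_empty, Finset.sum_empty, Nat.cast_zero,
      add_zero, inv_one, one_smul]
    exact (h1 i hiA).trans (hαshare i hiα)
  -- the key distance bound
  set μ : ℝ := ((1:ℝ) + (K:ℝ))⁻¹ with hμdef
  have hμpos : 0 < μ := by rw [hμdef]; positivity
  have hμmul : μ * (1 + (K:ℝ)) = 1 := inv_mul_cancel₀ (by positivity)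
  have hμle1 : μ ≤ 1 := by
    rw [hμdef]
    apply inv_le_one_of_one_le₀
    have : (0:ℝ) ≤ K := Nat.cast_nonneg K
    linarith
  have hq2 : q = xB + (μ * ε) • (xA - xB) := by
    rw [hqdef, ← Nat.cast_smul_eq_nsmul ℝ K xB]
    have hc : c + (K:ℝ) • xB = ((1:ℝ) + (K:ℝ)) • xB + ε • (xA - xB) := by
      rw [hcdef]; module
    rw [hc, smul_add, smul_smul, smul_smul, hμmul, one_smul]
  have hAq : xA - q = (1 - μ * ε) • (xA - xB) := by
    rw [hq2]; module
  have hμεle1 : μ * ε ≤ 1 := by nlinarith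
  have hnormAq : ‖xA - q‖ = (1 - μ * ε) * d0 := by
    rw [hAq, norm_smul, Real.norm_eq_abs, abs_of_nonneg (by linarith), ← hd0def]
  have hrw : rmin / (2 * ((K:ℝ) + 1)) = rmin / 2 * μ := by
    rw [hμdef]
    rw [← div_eq_mul_inv, div_div]
    ring_nf
  have hmain : ‖xA - q‖ < d0 - rmin / (2 * ((K:ℝ) + 1)) := by
    rw [hnormAq, hrw]
    have hfact : rmin / 2 * μ < ε * d0 * μ := by
      exact mul_lt_mul_of_pos_right hδgt hμpos
    nlinarith
  -- conclude
  intro i hi j hj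
  have hpos : ∀ i, i ∈ Cα ∪ Cβ →
      traj r E' x0 (t1+1) i = xA ∨ traj r E' x0 (t1+1) i = q := by
    intro i hi
    rcases Finset.mem_union.mp hi with hiα | hiβ
    · by_cases hA : i = A
      · exact Or.inr (hfinalq i (Or.inl hA))
      · exact Or.inl (hfinalα i hiα hA)
    · exact Or.inr (hfinalq i (Or.inr hiβ))
  have h0lt : 0 < d0 - rmin / (2 * ((K:ℝ) + 1)) := lt_of_le_of_lt (norm_nonneg _) hmain
  rcases hpos i hi with hyi | hyi <;> rcases hpos j hj with hyj | hyj <;>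
    rw [hyi, hyj]
  · simpa using h0lt
  · exact hmain
  · rw [norm_sub_rev]; exact hmain
  · simpa using h0lt
end
end

section
/- Consider the bounded-confidence dynamics with n agents and confidence bounds r_1,…,r_n > 0. Let α ≠ β be two agents and m ≥ 1 an integer such that 2^{m−1}·r_β < ‖x_α(0) − x_β(0)‖ ≤ r_α. Suppose E_s = {(α,β), (β,α)} for all times s = 0, 1, …, m−1. Then for every s = 0, 1, …, m: x_β(s) = x_β(0), x_α(s) = (1 − 2^{−s})·x_β(0) + 2^{−s}·x_α(0), and x_j(s) = x_j(0) for every agent j ∉ {α, β}; in particular ‖x_α(s) − x_β(0)‖ = 2^{−s}·‖x_α(0) − x_β(0)‖. -/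
open Finset MeasureTheory ProbabilityTheory Metric

noncomputable section

open scoped Classical

/-- With only the two edges `(α,β)` and `(β,α)` active for the first
`m` steps, and `2^{m-1} r_β < ‖x_α(0) - x_β(0)‖ ≤ r_α`, agent `β` stays put, agent `α`
halves its distance to `β` at every step, and all other agents do not move. -/
theorem bc_two_agent_halving
    {n d : ℕ} (hn : 3 ≤ n) (hd : 1 ≤ d)
    (r : Fin n → ℝ) (hrpos : ∀ i, 0 < r i)
    (x0 : Fin n → EuclideanSpace ℝ (Fin d))
    (α β : Fin n) (hαβ : α ≠ β) (m : ℕ) (hm : 1 ≤ m)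
    (hlow : 2 ^ (m - 1) * r β < ‖x0 α - x0 β‖)
    (hhigh : ‖x0 α - x0 β‖ ≤ r α)
    (E : ℕ → Finset (Fin n × Fin n))
    (hE : ∀ s, s < m → E s = ({(α, β), (β, α)} : Finset (Fin n × Fin n))) :
    ∀ s, s ≤ m →
      traj r E x0 s β = x0 β ∧
      traj r E x0 s α = (1 - ((2 : ℝ) ^ s)⁻¹) • x0 β + ((2 : ℝ) ^ s)⁻¹ • x0 α ∧
      (∀ j : Fin n, j ≠ α → j ≠ β → traj r E x0 s j = x0 j) ∧
      ‖traj r E x0 s α - x0 β‖ = ((2 : ℝ) ^ s)⁻¹ * ‖x0 α - x0 β‖ := by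
  have hD : (0 : ℝ) < ‖x0 α - x0 β‖ := by
    refine lt_of_le_of_lt ?_ hlow
    have := (hrpos β).le
    positivity
  intro s hs
  induction s with
  | zero =>
      refine ⟨rfl, ?_, fun j _ _ => rfl, ?_⟩
      · simp [traj]
      · simp [traj]
  | succ s ih =>
      have hsm : s < m := hs
      obtain ⟨hβ, hα, hoth, hnorm⟩ := ih (Nat.le_of_succ_le hs)
      have hEs := hE s hsm
      set x := traj r E x0 s with hx
      -- distance between α and β at time s
      have hdist : ‖x α - x β‖ = ((2 : ℝ) ^ s)⁻¹ * ‖x0 α - x0 β‖ := by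
        rw [hβ]; exact hnorm
      -- α sees β
      have hαsee : ‖x α - x β‖ ≤ r α := by
        rw [hdist]
        calc ((2 : ℝ) ^ s)⁻¹ * ‖x0 α - x0 β‖ ≤ 1 * ‖x0 α - x0 β‖ := by
              apply mul_le_mul_of_nonneg_right _ hD.le
              rw [inv_le_one_iff₀]
              right; exact one_le_pow₀ one_le_two
          _ ≤ r α := by rw [one_mul]; exact hhigh
      -- β does not see α
      have hβnotsee : ¬ ‖x β - x α‖ ≤ r β := by
        rw [norm_sub_rev, hdist]
        push_neg
        have h1 : (2 : ℝ) ^ s ≤ 2 ^ (m - 1) := by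
          apply pow_le_pow_right₀ one_le_two
          omega
        have h2 : (2 : ℝ) ^ s * r β < ‖x0 α - x0 β‖ := by
          refine lt_of_le_of_lt ?_ hlow
          exact mul_le_mul_of_nonneg_right h1 (hrpos β).le
        rw [lt_inv_mul_iff₀ (by positivity)]
        linarith
      -- neighbor set of β is empty
      have hnbrβ : nbr r (E s) x β = ∅ := by
        ext j
        simp only [nbr, Finset.mem_filter, Finset.mem_univ, true_and, hEs,
          Finset.mem_insert, Finset.mem_singleton, Prod.mk.injEq,
          Finset.notMem_empty, iff_false]
        rintro ⟨hj, (⟨h1, h2⟩ | h2), h3⟩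
        · exact hαβ h1.symm
        · exact hβnotsee (h2 ▸ h3)
      -- neighbor set of α is {β}
      have hnbrα : nbr r (E s) x α = {β} := by
        ext j
        simp only [nbr, Finset.mem_filter, Finset.mem_univ, true_and, hEs,
          Finset.mem_insert, Finset.mem_singleton, Prod.mk.injEq]
        constructor
        · rintro ⟨hj, (h2 | ⟨h1, h2⟩), h3⟩
          · exact h2
          · exact absurd h1 hαβ
        · rintro rfl
          exact ⟨fun h => hαβ h.symm, Or.inl rfl, hαsee⟩
      -- neighbor set of other j is empty
      have hnbrj : ∀ j : Fin n, j ≠ α → j ≠ β → nbr r (E s) x j = ∅ := by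
        intro j hjα hjβ
        ext k
        simp only [nbr, Finset.mem_filter, Finset.mem_univ, true_and, hEs,
          Finset.mem_insert, Finset.mem_singleton, Prod.mk.injEq,
          Finset.notMem_empty, iff_false]
        rintro ⟨hk, (⟨h1, h2⟩ | ⟨h1, h2⟩), h3⟩
        · exact hjα h1
        · exact hjβ h1
      have htraj : traj r E x0 (s + 1) = step r (E s) x := rfl
      refine ⟨?_, ?_, ?_, ?_⟩
      · rw [htraj]
        simp [step, hnbrβ, hβ]
      · rw [htraj]
        simp only [step, hnbrα, Finset.card_singleton, Nat.cast_one,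
          Finset.sum_singleton]
        rw [hα, hβ]
        have h2 : ((2:ℝ)^(s+1))⁻¹ = ((2:ℝ)^s)⁻¹ / 2 := by
          rw [pow_succ]; field_simp
        rw [h2]
        module
      · intro j hjα hjβ
        rw [htraj]
        simp [step, hnbrj j hjα hjβ, hoth j hjα hjβ]
      · rw [htraj]
        have : step r (E s) x α - x0 β = ((2:ℝ)^(s+1))⁻¹ • (x0 α - x0 β) := by
          simp only [step, hnbrα, Finset.card_singleton, Nat.cast_one,
            Finset.sum_singleton]
          rw [hα, hβ]
          have h2 : ((2:ℝ)^(s+1))⁻¹ = ((2:ℝ)^s)⁻¹ / 2 := by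
            rw [pow_succ]; field_simp
          rw [h2]
          module
        rw [this, norm_smul]
        simp [abs_of_nonneg (by positivity : (0:ℝ) ≤ ((2:ℝ)^(s+1))⁻¹)]
end
end

section
/- For every integer n ≥ 3 and every real r with 0 < r < 2, the following inequality holds: 1 + Σ_{i=2}^{n−1} ⌈(2/r − 1)·8i/(i+2) + 2⌉ < 3n − 2 + 8·(2/r − 1)·(n + 5/3 − 2·log(n+2)), where ⌈·⌉ is the ceiling function and log denotes the natural logarithm. Consequently, T_n^* := [1 + Σ_{i=2}^{n−1} ⌈(2/r − 1)·8i/(i+2) + 2⌉]·(⌈log₂(2/r)⌉ + 1) + n − 2 < T_n := [3n − 2 + 8(2/r − 1)(n + 5/3 − 2·log(n+2))]·(⌈log₂(2/r)⌉ + 1) + n − 2. -/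
lemma harm_bound (n : ℕ) (hn : 3 ≤ n) :
    Real.log ((n : ℝ) + 2) ≤ Real.log 4 + ∑ i ∈ Finset.Icc 2 (n - 1), 1 / ((i : ℝ) + 2) := by
  induction n with
  | zero => omega
  | succ m ih =>
    rcases Nat.lt_or_ge m 3 with h | h
    · have hm2 : m = 2 := by omega
      subst hm2
      have h5 : (0:ℝ) < 5 / 4 := by norm_num
      have hl := Real.log_le_sub_one_of_pos h5
      rw [Real.log_div (by norm_num) (by norm_num)] at hl
      norm_num
      linarith
    · have ihm := ih h
      have hm : m - 1 + 1 = m := by omega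
      have hsub : (m + 1) - 1 = m - 1 + 1 := by omega
      rw [hsub, Finset.sum_Icc_succ_top (by omega : 2 ≤ m - 1 + 1), hm]
      have hpos : (0:ℝ) < (m : ℝ) + 2 := by positivity
      have hq : (0:ℝ) < ((m : ℝ) + 3) / ((m : ℝ) + 2) := by positivity
      have hlog := Real.log_le_sub_one_of_pos hq
      rw [Real.log_div (by linarith) (by linarith)] at hlog
      have heq : ((m : ℝ) + 3) / ((m : ℝ) + 2) - 1 = 1 / ((m : ℝ) + 2) := by
        field_simp
        ring
      rw [heq] at hlog
      push_cast
      have hg : ((m : ℝ) + 1 + 2) = (m : ℝ) + 3 := by ring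
      rw [hg]
      linarith

/-- The simplification `T_n^* < T_n` of the time bound: for `n ≥ 3`
and `0 < r < 2`,
`1 + Σ_{i=2}^{n-1} ⌈(2/r - 1)·8i/(i+2) + 2⌉ < 3n - 2 + 8(2/r - 1)(n + 5/3 - 2 log(n+2))`,
and consequently `T_n^* < T_n`. -/
theorem time_bound_simplification
    (n : ℕ) (hn : 3 ≤ n) (r : ℝ) (hr0 : 0 < r) (hr2 : r < 2) :
    (1 + ∑ i ∈ Finset.Icc 2 (n - 1),
        (⌈(2 / r - 1) * (8 * (i : ℝ) / ((i : ℝ) + 2)) + 2⌉ : ℝ)) <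
      3 * (n : ℝ) - 2 + 8 * (2 / r - 1) * ((n : ℝ) + 5 / 3 - 2 * Real.log ((n : ℝ) + 2)) ∧
    (1 + ∑ i ∈ Finset.Icc 2 (n - 1),
        (⌈(2 / r - 1) * (8 * (i : ℝ) / ((i : ℝ) + 2)) + 2⌉ : ℝ)) *
        ((⌈Real.logb 2 (2 / r)⌉ : ℝ) + 1) + (n : ℝ) - 2 <
      (3 * (n : ℝ) - 2 + 8 * (2 / r - 1) * ((n : ℝ) + 5 / 3 - 2 * Real.log ((n : ℝ) + 2))) *
        ((⌈Real.logb 2 (2 / r)⌉ : ℝ) + 1) + (n : ℝ) - 2 := by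
  have hc0 : 0 < 2 / r - 1 := by
    have : 1 < 2 / r := (one_lt_div hr0).mpr hr2
    linarith
  set c : ℝ := 2 / r - 1 with hc
  set S : ℝ := ∑ i ∈ Finset.Icc 2 (n - 1), 1 / ((i : ℝ) + 2) with hS
  have hne : (Finset.Icc 2 (n - 1)).Nonempty := ⟨2, by simp; omega⟩
  have hcard : (Finset.Icc 2 (n - 1)).card = n - 2 := by
    rw [Nat.card_Icc]; omega
  have step1 : ∑ i ∈ Finset.Icc 2 (n - 1),
      (⌈c * (8 * (i : ℝ) / ((i : ℝ) + 2)) + 2⌉ : ℝ)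
      < ∑ i ∈ Finset.Icc 2 (n - 1), (c * (8 * (i : ℝ) / ((i : ℝ) + 2)) + 3) := by
    refine Finset.sum_lt_sum_of_nonempty hne fun i _ => ?_
    have := Int.ceil_lt_add_one (c * (8 * (i : ℝ) / ((i : ℝ) + 2)) + 2)
    linarith
  have step2 : ∑ i ∈ Finset.Icc 2 (n - 1), (c * (8 * (i : ℝ) / ((i : ℝ) + 2)) + 3)
      = (8 * c + 3) * ((n : ℝ) - 2) - 16 * c * S := by
    have h1 : ∀ i ∈ Finset.Icc 2 (n - 1),
        c * (8 * (i : ℝ) / ((i : ℝ) + 2)) + 3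
          = (8 * c + 3) - 16 * c * (1 / ((i : ℝ) + 2)) := by
      intro i _
      have hi : ((i : ℝ) + 2) ≠ 0 := by positivity
      field_simp
      ring
    rw [Finset.sum_congr rfl h1, Finset.sum_sub_distrib, Finset.sum_const, ← Finset.mul_sum,
      hcard, ← hS]
    have hcast : ((n - 2 : ℕ) : ℝ) = (n : ℝ) - 2 := by
      rw [Nat.cast_sub (by omega)]; norm_num
    rw [nsmul_eq_mul, hcast]
    ring
  have hlog4 : Real.log 4 < 11 / 6 := by
    have h2 := Real.log_two_lt_d9
    have h4 : (4 : ℝ) = 2 ^ 2 := by norm_num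
    rw [h4, Real.log_pow]
    push_cast
    linarith
  have hharm := harm_bound n hn
  have hSk : Real.log ((n : ℝ) + 2) ≤ 11 / 6 + S := by
    rw [← hS] at hharm
    linarith
  have key : (1 + ∑ i ∈ Finset.Icc 2 (n - 1),
      (⌈c * (8 * (i : ℝ) / ((i : ℝ) + 2)) + 2⌉ : ℝ)) <
      3 * (n : ℝ) - 2 + 8 * c * ((n : ℝ) + 5 / 3 - 2 * Real.log ((n : ℝ) + 2)) := by
    have hmul := mul_le_mul_of_nonneg_left hSk hc0.le
    nlinarith [step1, step2]
  refine ⟨key, ?_⟩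
  have hM : (0 : ℝ) < (⌈Real.logb 2 (2 / r)⌉ : ℝ) + 1 := by
    have h1 : (0 : ℝ) < Real.logb 2 (2 / r) := by
      apply Real.logb_pos (by norm_num)
      rw [hc] at hc0; linarith
    have := Int.ceil_pos.mpr h1
    have : (1 : ℝ) ≤ (⌈Real.logb 2 (2 / r)⌉ : ℝ) := by exact_mod_cast this
    linarith
  have := mul_lt_mul_of_pos_right key hM
  linarith
end
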